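/- For the Laurent polynomial W(y1, y2) = y1 + y2 + y1 y2 + 1/y1 + 1/y2 + 1/(y1 y2) over \mathbb{C} (the potential of the monotone torus in Bl^3 \P^2), the set of critical values is {6, -2, -3}; equivalently, in the Jacobian ring \mathbb{Q}[y1^{\pm},y2^{\pm}]/(y1 \partial_{y1} W, y2 \partial_{y2} W), the element W satisfies (W - 6)(W + 2)(W + 3) = 0 and this cubic is its minimal polynomial. -/

import Mathlib

open MvPolynomial

/-- The potential `w = y₁ + y₂ + y₁y₂ + Y₁ + Y₂ + Y₁Y₂` of the monotone torus in
`Bl³ℙ²`, with `X 0 = y₁`, `X 1 = y₂`, `X 2 = Y₁`, `X 3 = Y₂`. -/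
noncomputable def wBl3 : MvPolynomial (Fin 4) ℚ :=
  X 0 + X 1 + X 0 * X 1 + X 2 + X 3 + X 2 * X 3

/-- The logarithmic critical point equation `D1 = y₁ ∂_{y₁} w - Y₁ ∂_{Y₁} w`. -/
noncomputable def D1Bl3 : MvPolynomial (Fin 4) ℚ :=
  X 0 * pderiv (0 : Fin 4) wBl3 - X 2 * pderiv (2 : Fin 4) wBl3

/-- The logarithmic critical point equation `D2 = y₂ ∂_{y₂} w - Y₂ ∂_{Y₂} w`. -/
noncomputable def D2Bl3 : MvPolynomial (Fin 4) ℚ :=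
  X 1 * pderiv (1 : Fin 4) wBl3 - X 3 * pderiv (3 : Fin 4) wBl3

/-- The Jacobian ideal of the potential of `Bl³ℙ²`. -/
noncomputable def jacIdealBl3 : Ideal (MvPolynomial (Fin 4) ℚ) :=
  Ideal.span {X 0 * X 2 - 1, X 1 * X 3 - 1, D1Bl3, D2Bl3}

/-!
The logarithmic critical point equations `y₁ ∂_{y₁} W = y₂ ∂_{y₂} W = 0` read
`y₁ (1 + y₂) = y₁⁻¹ (1 + y₂⁻¹)` and `y₂ (1 + y₁) = y₂⁻¹ (1 + y₁⁻¹)`. Together with `y₁ y₁⁻¹ = 1`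
and `y₂ y₂⁻¹ = 1` they imply `(W - 6)(W + 2)(W + 3) = 0` in every commutative ring, by an explicit
ideal-membership certificate; this gives the relation in the Jacobian ring and bounds the critical
values. Conversely all three values are attained on the diagonal `y₁ = y₂ = y` with `y = 1, -1` and
`y` a primitive cube root of unity. Each such critical point is a `ℚ`-algebra map from the Jacobian
ring to `ℂ` sending `W` to the critical value, so any polynomial killing `W` has the three distinct
roots `6, -2, -3`, and the cubic generates the kernel.
-/

theorem cubic_eq_zero_of_jacobian_relations {R : Type*} [CommRing R] {x y u v : R}
    (hu : x * u = 1) (hv : y * v = 1)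
    (h₁ : x * (1 + y) = u * (1 + v)) (h₂ : y * (1 + x) = v * (1 + u)) :
    (x + y + x * y + u + v + u * v - 6) * (x + y + x * y + u + v + u * v + 2) *
      (x + y + x * y + u + v + u * v + 3) = 0 := by
  linear_combination
    (8 + 16*v + 7*v^2 + 5*u + 18*u*v + 4*u*v^2 + 5*u^2*v + 7*y + 24*y*v + 9*y*v^2 - 6*y*u
      + 13*y*u*v + 4*y*u*v^2 - 5*y*u^2 + y^2 + 9*y^2*v - 6*y^2*u - y^3 + 4*x + 4*x*v + 8*x*y
      + 8*x*y*v + 4*x*y^2 + 4*x*y^2*v) * hu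
    + (28 + 13*v + 24*u + 15*u*v + 9*u^2 + 3*u^2*v + u^3 + 12*y + 6*y*u + y*u^2 + 15*x + x*v
      + 10*x*y + 3*x^2 + 3*x^2*y) * hv
    + (-5 + 3*v + 3*v^2 - 8*u - 7*u*v + 2*u*v^2 - 2*u^2 - 12*u^2*v - u^2*v^2 - 5*u^3*v + 2*y
      + 7*y*u + 5*y*u^2 + 3*y^2 + y^2*u + 2*x + 3*x*v + 2*x*y + 3*x*y^2 + x^2 + 2*x^2*y
      + x^2*y^2) * h₁
    + (-5 - 6*v - v^2 - 5*u*v - 5*u*v^2 + 6*u^2 + 5*u^2*v + 5*u^3 + 5*u^3*v + y*u^2) * h₂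

theorem ker_aeval_eq_span_prod_X_sub_C {K R L : Type*} [Field K] [CommRing R] [Algebra K R]
    [CommRing L] [Nontrivial L] [Algebra K L] (x : R) (s : Finset K)
    (hx : Polynomial.aeval x (∏ a ∈ s, (Polynomial.X - Polynomial.C a)) = 0)
    (hroots : ∀ a ∈ s, ∃ φ : R →ₐ[K] L, φ x = algebraMap K L a) :
    RingHom.ker (Polynomial.aeval x : Polynomial K →ₐ[K] R).toRingHom
      = Ideal.span {∏ a ∈ s, (Polynomial.X - Polynomial.C a)} := by
  refine le_antisymm (fun p hp => Ideal.mem_span_singleton.2 ?_) ?_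
  · have hroot : ∀ a ∈ s, p.IsRoot a := fun a ha => by
      obtain ⟨φ, hφ⟩ := hroots a ha
      have : algebraMap K L (p.eval a) = 0 := by
        rw [← Polynomial.aeval_algebraMap_apply_eq_algebraMap_eval, ← hφ,
          Polynomial.aeval_algHom_apply, show Polynomial.aeval x p = 0 from hp, map_zero]
      exact (map_eq_zero_iff _ (algebraMap K L).injective).1 this
    exact Finset.prod_dvd_of_coprime
      ((Polynomial.pairwise_coprime_X_sub_C Function.injective_id).set_pairwise _)
      fun a ha => Polynomial.dvd_iff_isRoot.2 (hroot a ha)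
  · rw [Ideal.span_le, Set.singleton_subset_iff]
    exact hx

theorem mul_deriv_potential_fst {b y : ℂ} (hy : y ≠ 0) :
    y * deriv (fun t : ℂ => t + b + t * b + t⁻¹ + b⁻¹ + (t * b)⁻¹) y
      = y * (1 + b) - y⁻¹ * (1 + b⁻¹) := by
  have hf : (fun t : ℂ => t + b + t * b + t⁻¹ + b⁻¹ + (t * b)⁻¹)
      = fun t => t * (1 + b) + t⁻¹ * (1 + b⁻¹) + (b + b⁻¹) := by
    funext t; rw [mul_inv]; ring
  have hderiv : HasDerivAt (fun t : ℂ => t * (1 + b) + t⁻¹ * (1 + b⁻¹) + (b + b⁻¹))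
      (1 * (1 + b) + -(y ^ 2)⁻¹ * (1 + b⁻¹)) y :=
    (((hasDerivAt_id' y).mul_const (1 + b)).add
      ((hasDerivAt_inv hy).mul_const (1 + b⁻¹))).add_const (b + b⁻¹)
  rw [hf, hderiv.deriv]
  field_simp
  ring

theorem mul_deriv_potential_snd {a y : ℂ} (hy : y ≠ 0) :
    y * deriv (fun t : ℂ => a + t + a * t + a⁻¹ + t⁻¹ + (a * t)⁻¹) y
      = y * (1 + a) - y⁻¹ * (1 + a⁻¹) := by
  have hf : (fun t : ℂ => a + t + a * t + a⁻¹ + t⁻¹ + (a * t)⁻¹)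
      = fun t => t + a + t * a + t⁻¹ + a⁻¹ + (t * a)⁻¹ := by
    funext t; ring
  rw [hf, mul_deriv_potential_fst hy]

theorem exists_diagonal_critical_point {c : ℂ} (hc : c = 6 ∨ c = -2 ∨ c = -3) :
    ∃ y : ℂ, y ≠ 0 ∧ y * (1 + y) = y⁻¹ * (1 + y⁻¹) ∧
      y + y + y * y + y⁻¹ + y⁻¹ + y⁻¹ * y⁻¹ = c := by
  rcases hc with rfl | rfl | rfl
  · exact ⟨1, one_ne_zero, by norm_num, by norm_num⟩
  · exact ⟨-1, by norm_num, by norm_num, by norm_num⟩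
  · obtain ⟨s, hs⟩ := IsAlgClosed.exists_eq_mul_self (-3 : ℂ)
    obtain ⟨ω, hω⟩ := exists_quadratic_eq_zero (a := (1 : ℂ)) (b := 1) (c := 1) one_ne_zero
      ⟨s, by rw [discrim, ← hs]; norm_num⟩
    have hω0 : ω ≠ 0 := by rintro rfl; norm_num at hω
    have hinv : ω⁻¹ = -1 - ω := inv_eq_of_mul_eq_one_right (by linear_combination -hω)
    refine ⟨ω, hω0, ?_, ?_⟩ <;> rw [hinv]
    · ring
    · linear_combination 2 * hω

section

variable {A : Type*} [CommRing A] [Algebra ℚ A]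

theorem jacIdealBl3_le_ker_aeval_iff (v : Fin 4 → A) :
    jacIdealBl3 ≤ RingHom.ker (aeval v) ↔ v 0 * v 2 = 1 ∧ v 1 * v 3 = 1 ∧
      v 0 * (1 + v 1) = v 2 * (1 + v 3) ∧ v 1 * (1 + v 0) = v 3 * (1 + v 2) := by
  simp [jacIdealBl3, Ideal.span_le, Set.insert_subset_iff, D1Bl3, D2Bl3, wBl3, pderiv_X,
    sub_eq_zero]

theorem aeval_wBl3 (v : Fin 4 → A) :
    aeval v wBl3 = v 0 + v 1 + v 0 * v 1 + v 2 + v 3 + v 2 * v 3 := by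
  simp [wBl3]

end

theorem mk_wBl3_cubic_eq_zero :
    (Ideal.Quotient.mk jacIdealBl3 wBl3 - 6) * (Ideal.Quotient.mk jacIdealBl3 wBl3 + 2) *
        (Ideal.Quotient.mk jacIdealBl3 wBl3 + 3) = 0 := by
  have hmk : aeval (fun i => Ideal.Quotient.mkₐ ℚ jacIdealBl3 (X i))
      = Ideal.Quotient.mkₐ ℚ jacIdealBl3 := by
    rw [← comp_aeval, aeval_X_left, AlgHom.comp_id]
  obtain ⟨hu, hv, h₁, h₂⟩ := (jacIdealBl3_le_ker_aeval_iff _).1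
    (hmk ▸ (Ideal.Quotient.mkₐ_ker ℚ jacIdealBl3).ge)
  have hw := aeval_wBl3 fun i => Ideal.Quotient.mkₐ ℚ jacIdealBl3 (X i)
  rw [hmk, Ideal.Quotient.mkₐ_eq_mk] at hw
  rw [hw]
  exact cubic_eq_zero_of_jacobian_relations hu hv h₁ h₂

theorem exists_algHom_mk_wBl3_eq {c : ℂ} (hc : c = 6 ∨ c = -2 ∨ c = -3) :
    ∃ φ : (MvPolynomial (Fin 4) ℚ ⧸ jacIdealBl3) →ₐ[ℚ] ℂ,
      φ (Ideal.Quotient.mk jacIdealBl3 wBl3) = c := by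
  obtain ⟨y, hy, hcrit, rfl⟩ := exists_diagonal_critical_point hc
  have hker := (jacIdealBl3_le_ker_aeval_iff ![y, y, y⁻¹, y⁻¹]).2
    ⟨mul_inv_cancel₀ hy, mul_inv_cancel₀ hy, hcrit, hcrit⟩
  have hI : ∀ p ∈ jacIdealBl3, aeval ![y, y, y⁻¹, y⁻¹] p = 0 := fun p hp => hker hp
  exact ⟨Ideal.Quotient.liftₐ _ _ hI,
    (AlgHom.congr_fun (Ideal.Quotient.liftₐ_comp _ _ hI) wBl3).trans (by simp [aeval_wBl3])⟩

theorem X_sub_six_mul_X_add_two_mul_X_add_three :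
    (Polynomial.X - 6 : Polynomial ℚ) * (Polynomial.X + 2) * (Polynomial.X + 3)
      = ∏ a ∈ ({6, -2, -3} : Finset ℚ), (Polynomial.X - Polynomial.C a) := by
  rw [Finset.prod_insert (by norm_num), Finset.prod_insert (by norm_num), Finset.prod_singleton]
  simp only [map_neg, map_ofNat]
  ring

/-- For `W(y₁,y₂) = y₁ + y₂ + y₁y₂ + 1/y₁ + 1/y₂ + 1/(y₁y₂)` (the potential of the
monotone torus in `Bl³ℙ²`), the set of critical values is `{6, -2, -3}`; equivalently,
in the Jacobian ring the element `w` satisfies `(w-6)(w+2)(w+3) = 0` and this cubic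
generates the kernel of `ℚ[z] → R`, `z ↦ w` (it is the minimal polynomial relation). -/
theorem critical_values_Bl3P2 :
    {c : ℂ | ∃ y1 y2 : ℂ, y1 ≠ 0 ∧ y2 ≠ 0 ∧
        y1 * deriv (fun t : ℂ => t + y2 + t * y2 + t⁻¹ + y2⁻¹ + (t * y2)⁻¹) y1 = 0 ∧
        y2 * deriv (fun t : ℂ => y1 + t + y1 * t + y1⁻¹ + t⁻¹ + (y1 * t)⁻¹) y2 = 0 ∧
        y1 + y2 + y1 * y2 + y1⁻¹ + y2⁻¹ + (y1 * y2)⁻¹ = c}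
      = {(6 : ℂ), (-2 : ℂ), (-3 : ℂ)} ∧
    (Ideal.Quotient.mk jacIdealBl3 wBl3 - 6) * (Ideal.Quotient.mk jacIdealBl3 wBl3 + 2) *
        (Ideal.Quotient.mk jacIdealBl3 wBl3 + 3) = 0 ∧
    RingHom.ker ((Polynomial.aeval (Ideal.Quotient.mk jacIdealBl3 wBl3) :
        Polynomial ℚ →ₐ[ℚ] MvPolynomial (Fin 4) ℚ ⧸ jacIdealBl3).toRingHom) =
      Ideal.span {(Polynomial.X - 6) * (Polynomial.X + 2) * (Polynomial.X + 3)} := by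
  have hcubic := mk_wBl3_cubic_eq_zero
  refine ⟨Set.ext fun c => ⟨?_, fun hc => ?_⟩, hcubic, ?_⟩
  · rintro ⟨y1, y2, hy1, hy2, h1, h2, rfl⟩
    rw [mul_deriv_potential_fst hy1, sub_eq_zero] at h1
    rw [mul_deriv_potential_snd hy2, sub_eq_zero] at h2
    have h := cubic_eq_zero_of_jacobian_relations (mul_inv_cancel₀ hy1) (mul_inv_cancel₀ hy2) h1 h2
    rw [← mul_inv] at h
    simpa [sub_eq_zero, add_eq_zero_iff_eq_neg, or_assoc] using h
  · obtain ⟨y, hy, hcrit, rfl⟩ := exists_diagonal_critical_point hc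
    refine ⟨y, y, hy, hy, ?_, ?_, by rw [mul_inv]⟩
    · rw [mul_deriv_potential_fst hy, hcrit, sub_self]
    · rw [mul_deriv_potential_snd hy, hcrit, sub_self]
  · rw [X_sub_six_mul_X_add_two_mul_X_add_three]
    refine ker_aeval_eq_span_prod_X_sub_C (L := ℂ) _ _ ?_ fun a ha => ?_
    · rw [← X_sub_six_mul_X_add_two_mul_X_add_three]
      simpa only [map_mul, map_sub, map_add, Polynomial.aeval_X, map_ofNat] using hcubic
    · simp only [Finset.mem_insert, Finset.mem_singleton] at ha
      exact exists_algHom_mk_wBl3_eq (by rcases ha with rfl | rfl | rfl <;> norm_num)
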